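/- For fixed x > 0, the function g(σ) = σ·H(x/σ), which equals the mean of a centered normal variable with standard deviation σ conditioned to be at least x, is strictly increasing in σ on (0,∞) and g(σ) → x as σ → 0⁺. For x = 0, g(σ) = σ·√(2/π) for all σ > 0. -/

import Mathlib

open MeasureTheory Real Set Filter

/-- Standard normal pdf. -/
noncomputable def phi (x : ℝ) : ℝ := Real.exp (-x ^ 2 / 2) / Real.sqrt (2 * Real.pi)

/-- Standard normal cdf. -/
noncomputable def Phi (x : ℝ) : ℝ := ∫ y in Set.Iic x, phi y

/-- Standard normal hazard rate. -/
noncomputable def Haz (x : ℝ) : ℝ := phi x / (1 - Phi x)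

/-!
With `t = x / σ` one has `σ * H (x / σ) = x / (t * R t)`, where `R = (1 - Φ) / φ` is the Mills
ratio. Since `φ' = -t φ`, the derivative of `t * R t` is `((1 + t²)(1 - Φ t) - t φ t) / φ t`,
which is positive by Gordon's inequality `t φ t < (1 + t²)(1 - Φ t)`; so `t * R t` increases in
`t`, i.e. `σ * H (x / σ)` increases in `σ`. Gordon's inequality and `t (1 - Φ t) ≤ φ t` squeeze
`t * R t` to `1` as `t → ∞`, which is the limit `σ → 0⁺`. At `x = 0`, symmetry of `φ` gives
`1 - Φ 0 = 1 / 2`, so `H 0 = 2 φ 0 = √(2 / π)`.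
-/

open Topology

lemma phi_eq_gaussianPDFReal : phi = ProbabilityTheory.gaussianPDFReal 0 1 := by
  ext y
  simp [phi, ProbabilityTheory.gaussianPDFReal, div_eq_inv_mul]

lemma phi_pos (y : ℝ) : 0 < phi y := by
  rw [phi_eq_gaussianPDFReal]
  exact ProbabilityTheory.gaussianPDFReal_pos 0 1 y one_ne_zero

lemma integrable_phi : Integrable phi :=
  phi_eq_gaussianPDFReal ▸ ProbabilityTheory.integrable_gaussianPDFReal 0 1

lemma integral_phi : ∫ y, phi y = 1 :=
  phi_eq_gaussianPDFReal ▸ ProbabilityTheory.integral_gaussianPDFReal_eq_one 0 one_ne_zero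

lemma phi_neg (y : ℝ) : phi (-y) = phi y := by
  simp [phi]

lemma hasDerivAt_phi (y : ℝ) : HasDerivAt phi (-y * phi y) y := by
  have hq : HasDerivAt (fun z : ℝ => -z ^ 2 / 2) (-y) y := by
    simpa [neg_div] using ((hasDerivAt_pow 2 y).div_const 2).fun_neg
  exact (hq.exp.div_const (√(2 * π))).congr_deriv (by rw [phi]; ring)

lemma continuous_phi : Continuous phi := by
  unfold phi; fun_prop

lemma tendsto_phi_atTop : Tendsto phi atTop (𝓝 0) := by
  have h : Tendsto (fun y : ℝ => -y ^ 2 / 2) atTop atBot :=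
    (tendsto_neg_atBot_iff.2 (tendsto_pow_atTop two_ne_zero)).atBot_div_const two_pos
  have := (tendsto_exp_atBot.comp h).div_const (√(2 * π))
  rwa [zero_div] at this

noncomputable def normalTail (t : ℝ) : ℝ := ∫ y in Ioi t, phi y

lemma one_sub_Phi (t : ℝ) : 1 - Phi t = normalTail t := by
  rw [← integral_phi, ← intervalIntegral.integral_Iic_add_Ioi integrable_phi.integrableOn
    integrable_phi.integrableOn, Phi, normalTail, add_sub_cancel_left]

lemma normalTail_pos (t : ℝ) : 0 < normalTail t := by
  have hsupp : Function.support phi = univ := Function.support_eq_univ fun y => (phi_pos y).ne'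
  rw [normalTail, setIntegral_pos_iff_support_of_nonneg_ae (ae_of_all _ fun y => (phi_pos y).le)
    integrable_phi.integrableOn, hsupp, univ_inter, Real.volume_Ioi]
  exact ENNReal.zero_lt_top

lemma hasDerivAt_Phi (t : ℝ) : HasDerivAt Phi (phi t) t := by
  have hPhi : Phi = fun u => Phi 0 + ∫ y in (0 : ℝ)..u, phi y := by
    ext u
    rw [← intervalIntegral.integral_Iic_sub_Iic integrable_phi.integrableOn
      integrable_phi.integrableOn, Phi, Phi, add_sub_cancel]
  rw [hPhi]
  exact (intervalIntegral.integral_hasDerivAt_right integrable_phi.intervalIntegrable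
    (continuous_phi.stronglyMeasurableAtFilter _ _) continuous_phi.continuousAt).const_add _

lemma hasDerivAt_normalTail (t : ℝ) : HasDerivAt normalTail (-phi t) t :=
  ((hasDerivAt_Phi t).const_sub 1).congr_of_eventuallyEq
    (Eventually.of_forall fun u => (one_sub_Phi u).symm)

lemma normalTail_zero : normalTail 0 = 1 / 2 := by
  have hsymm : Phi 0 = normalTail 0 := by
    calc Phi 0 = ∫ y in Iic 0, phi (-y) := by simp only [phi_neg]; rfl
      _ = normalTail 0 := by rw [integral_comp_neg_Iic, neg_zero]; rfl
  linarith [one_sub_Phi 0]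

lemma mul_normalTail_le_phi {t : ℝ} (ht : 0 ≤ t) : t * normalTail t ≤ phi t := by
  have hderiv : ∀ y ∈ Ici t, HasDerivAt (fun y => -phi y) (y * phi y) y := fun y _ =>
    (hasDerivAt_phi y).neg.congr_deriv (by ring)
  have hnonneg : ∀ y ∈ Ioi t, 0 ≤ y * phi y := fun y hy =>
    mul_nonneg (ht.trans hy.le) (phi_pos y).le
  have hlim : Tendsto (fun y => -phi y) atTop (𝓝 0) := by simpa using tendsto_phi_atTop.neg
  calc t * normalTail t = ∫ y in Ioi t, t * phi y := (integral_const_mul t _).symm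
    _ ≤ ∫ y in Ioi t, y * phi y :=
      setIntegral_mono_on (integrable_phi.integrableOn.const_mul t)
        (integrableOn_Ioi_deriv_of_nonneg' hderiv hnonneg hlim) measurableSet_Ioi
        fun y hy => mul_le_mul_of_nonneg_right hy.le (phi_pos y).le
    _ = phi t := by simpa using integral_Ioi_of_hasDerivAt_of_nonneg' hderiv hnonneg hlim

lemma tendsto_normalTail_atTop : Tendsto normalTail atTop (𝓝 0) := by
  refine tendsto_of_tendsto_of_tendsto_of_le_of_le' tendsto_const_nhds
    (by simpa using tendsto_phi_atTop.mul tendsto_inv_atTop_zero)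
    (Eventually.of_forall fun t => (normalTail_pos t).le) ?_
  filter_upwards [eventually_gt_atTop 0] with t ht
  rw [← div_eq_mul_inv, le_div_iff₀ ht, mul_comm]
  exact mul_normalTail_le_phi ht.le

lemma hasDerivAt_mul_phi_div (y : ℝ) :
    HasDerivAt (fun y => y * phi y / (1 + y ^ 2))
      (phi y * (1 - 2 * y ^ 2 - y ^ 4) / (1 + y ^ 2) ^ 2) y := by
  have hden : HasDerivAt (fun y : ℝ => 1 + y ^ 2) (2 * y) y := by
    simpa using (hasDerivAt_pow 2 y).const_add 1
  refine (((hasDerivAt_id y).mul (hasDerivAt_phi y)).div hden (by positivity)).congr_deriv ?_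
  simp only [Pi.mul_apply, id]
  ring

lemma tendsto_mul_phi_div_atTop : Tendsto (fun y => y * phi y / (1 + y ^ 2)) atTop (𝓝 0) := by
  refine tendsto_of_tendsto_of_tendsto_of_le_of_le' tendsto_const_nhds tendsto_phi_atTop ?_ ?_
  all_goals filter_upwards [eventually_ge_atTop 0] with y hy
  · exact div_nonneg (mul_nonneg hy (phi_pos y).le) (by positivity)
  · rw [div_le_iff₀ (by positivity)]
    nlinarith [phi_pos y, sq_nonneg (y - 1)]

lemma mul_phi_lt_normalTail (t : ℝ) : t * phi t < (1 + t ^ 2) * normalTail t := by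
  set G : ℝ → ℝ := fun y => normalTail y - y * phi y / (1 + y ^ 2)
  have hG : StrictAnti G := by
    refine strictAnti_of_hasDerivAt_neg (f' := fun y => -(2 * phi y / (1 + y ^ 2) ^ 2))
      (fun y => ((hasDerivAt_normalTail y).sub (hasDerivAt_mul_phi_div y)).congr_deriv ?_)
      fun y => neg_lt_zero.2 (by have := phi_pos y; positivity)
    field_simp
    ring
  have hlim : Tendsto G atTop (𝓝 0) := by
    simpa using tendsto_normalTail_atTop.sub tendsto_mul_phi_div_atTop
  have hpos : 0 < G t := (hG.antitone.le_of_tendsto hlim (t + 1)).trans_lt (hG (lt_add_one t))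
  have hden : 0 < 1 + t ^ 2 := by positivity
  simp only [G, sub_pos, div_lt_iff₀ hden] at hpos
  linarith

noncomputable def millsRatio (t : ℝ) : ℝ := normalTail t / phi t

lemma millsRatio_pos (t : ℝ) : 0 < millsRatio t :=
  div_pos (normalTail_pos t) (phi_pos t)

lemma Haz_eq_inv_millsRatio (t : ℝ) : Haz t = (millsRatio t)⁻¹ := by
  rw [Haz, millsRatio, one_sub_Phi, inv_div]

lemma hasDerivAt_mul_millsRatio (t : ℝ) :
    HasDerivAt (fun t => t * millsRatio t)
      (((1 + t ^ 2) * normalTail t - t * phi t) / phi t) t := by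
  have hR := (hasDerivAt_normalTail t).div (hasDerivAt_phi t) (phi_pos t).ne'
  refine ((hasDerivAt_id t).mul hR).congr_deriv ?_
  have := (phi_pos t).ne'
  simp only [Pi.div_apply, id]
  field_simp
  ring

lemma strictMono_mul_millsRatio : StrictMono fun t => t * millsRatio t :=
  strictMono_of_hasDerivAt_pos hasDerivAt_mul_millsRatio fun t =>
    div_pos (sub_pos.2 (mul_phi_lt_normalTail t)) (phi_pos t)

lemma tendsto_mul_millsRatio_atTop : Tendsto (fun t => t * millsRatio t) atTop (𝓝 1) := by
  have hlower : Tendsto (fun t : ℝ => 1 - (1 + t ^ 2)⁻¹) atTop (𝓝 1) := by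
    simpa using tendsto_const_nhds.sub (tendsto_inv_atTop_zero.comp
      (tendsto_atTop_add_const_left _ 1 (tendsto_pow_atTop (α := ℝ) two_ne_zero)))
  refine tendsto_of_tendsto_of_tendsto_of_le_of_le' hlower tendsto_const_nhds ?_ ?_
  all_goals filter_upwards [eventually_ge_atTop 0] with t ht
  · have hden : 0 < 1 + t ^ 2 := by positivity
    have hsub : 1 - (1 + t ^ 2)⁻¹ = t ^ 2 / (1 + t ^ 2) := by field_simp; ring
    rw [millsRatio, hsub, mul_div_assoc', div_le_div_iff₀ hden (phi_pos t)]
    nlinarith [mul_phi_lt_normalTail t]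
  · rw [millsRatio, mul_div_assoc', div_le_one (phi_pos t)]
    exact mul_normalTail_le_phi ht

lemma Haz_zero : Haz 0 = √(2 / π) := by
  rw [Haz, one_sub_Phi, normalTail_zero, phi, sqrt_div' _ pi_pos.le, sqrt_mul zero_le_two]
  have h2 : √2 ^ 2 = 2 := sq_sqrt zero_le_two
  have := sqrt_pos.2 pi_pos
  field_simp
  simp [h2]

lemma mul_Haz_div_eq {x σ : ℝ} (hx : x ≠ 0) (hσ : σ ≠ 0) :
    σ * Haz (x / σ) = x / (x / σ * millsRatio (x / σ)) := by
  have := (millsRatio_pos (x / σ)).ne'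
  rw [Haz_eq_inv_millsRatio]
  field_simp

theorem stmt5_general (x : ℝ) :
    (0 < x →
      StrictMonoOn (fun σ => σ * Haz (x / σ)) (Set.Ioi 0) ∧
      Tendsto (fun σ => σ * Haz (x / σ)) (nhdsWithin 0 (Set.Ioi 0)) (nhds x)) ∧
    (x = 0 → ∀ σ : ℝ, 0 < σ → σ * Haz (x / σ) = σ * Real.sqrt (2 / Real.pi)) := by
  refine ⟨fun hx => ⟨fun σ₁ hσ₁ σ₂ hσ₂ hσ => ?_, ?_⟩, fun hx σ _ => by rw [hx, zero_div, Haz_zero]⟩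
  · simp only [mul_Haz_div_eq hx.ne' (ne_of_gt hσ₁), mul_Haz_div_eq hx.ne' (ne_of_gt hσ₂)]
    have hm := strictMono_mul_millsRatio (div_lt_div_of_pos_left hx hσ₁ hσ)
    exact div_lt_div_of_pos_left hx (mul_pos (div_pos hx hσ₂) (millsRatio_pos _)) hm
  · have ht : Tendsto (fun σ => x / σ) (𝓝[>] 0) atTop := by
      simpa only [div_eq_mul_inv] using tendsto_inv_nhdsGT_zero.const_mul_atTop hx
    have hlim :=
      (tendsto_const_nhds (x := x)).div (tendsto_mul_millsRatio_atTop.comp ht) one_ne_zero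
    rw [div_one] at hlim
    refine hlim.congr' ?_
    filter_upwards [self_mem_nhdsWithin] with σ hσ
    exact (mul_Haz_div_eq hx.ne' (ne_of_gt hσ)).symm

theorem stmt5 (x : ℝ) (hx : 0 ≤ x) :
    (0 < x →
      StrictMonoOn (fun σ => σ * Haz (x / σ)) (Set.Ioi 0) ∧
      Tendsto (fun σ => σ * Haz (x / σ)) (nhdsWithin 0 (Set.Ioi 0)) (nhds x)) ∧
    (x = 0 → ∀ σ : ℝ, 0 < σ → σ * Haz (x / σ) = σ * Real.sqrt (2 / Real.pi)) :=
  stmt5_general x
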